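/- Let H be an infinite-dimensional complex separable Hilbert space and A ∈ B(H) such that the semigroup {e^{tA}}_{t≥0} is exponentially stable. If G ⊂ H is a countable Bessel system such that {e^{tA}g}_{g∈G, t∈[0,∞)} is a semi-continuous frame for H, then G is infinite. -/

import Mathlib

open MeasureTheory
open scoped ComplexInnerProductSpace

noncomputable section

variable {H : Type*} [NormedAddCommGroup H] [InnerProductSpace ℂ H] [CompleteSpace H]

/-- The operator exponential `e^{tA}` for a bounded operator `A`. -/
def expT (A : H →L[ℂ] H) (t : ℝ) : H →L[ℂ] H :=
  NormedSpace.exp ((t : ℂ) • A)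

/-- `G` is a Bessel system in `H`. -/
def IsBesselSet (G : Set H) : Prop :=
  ∃ K > (0 : ℝ), ∀ f : H, ∑' g : G, ‖⟪f, (g : H)⟫‖ ^ 2 ≤ K * ‖f‖ ^ 2

/-- `{e^{tA} g}_{g ∈ G, t ∈ S}` is a semi-continuous frame for `H`. -/
def SemiContFrame (A : H →L[ℂ] H) (G : Set H) (S : Set ℝ) : Prop :=
  ∃ c > (0 : ℝ), ∃ C > (0 : ℝ), ∀ f : H,
    c * ‖f‖ ^ 2 ≤ ∑' g : G, ∫ t in S, ‖⟪f, expT A t (g : H)⟫‖ ^ 2 ∧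
    ∑' g : G, ∫ t in S, ‖⟪f, expT A t (g : H)⟫‖ ^ 2 ≤ C * ‖f‖ ^ 2

/-- `{e^{t_j A} g}_{g ∈ G, j}` is a frame for `H`, for a finite list of times `t`. -/
def FinTimeFrame (A : H →L[ℂ] H) (G : Set H) {n : ℕ} (t : Fin n → ℝ) : Prop :=
  ∃ c > (0 : ℝ), ∃ C > (0 : ℝ), ∀ f : H,
    c * ‖f‖ ^ 2 ≤ ∑' g : G, ∑ j, ‖⟪f, expT A (t j) (g : H)⟫‖ ^ 2 ∧
    ∑' g : G, ∑ j, ‖⟪f, expT A (t j) (g : H)⟫‖ ^ 2 ≤ C * ‖f‖ ^ 2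

/-- `{e^{t_j A} g}_{g ∈ G, j ∈ ℕ}` is a frame for `H`, for a countable set of times `t`. -/
def NatTimeFrame (A : H →L[ℂ] H) (G : Set H) (t : ℕ → ℝ) : Prop :=
  ∃ c > (0 : ℝ), ∃ C > (0 : ℝ), ∀ f : H,
    c * ‖f‖ ^ 2 ≤ ∑' g : G, ∑' j : ℕ, ‖⟪f, expT A (t j) (g : H)⟫‖ ^ 2 ∧
    ∑' g : G, ∑' j : ℕ, ‖⟪f, expT A (t j) (g : H)⟫‖ ^ 2 ≤ C * ‖f‖ ^ 2

/-- The semigroup `{e^{tA}}_{t ≥ 0}` is exponentially stable. -/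
def ExpStable (A : H →L[ℂ] H) : Prop :=
  ∃ M ≥ (1 : ℝ), ∃ ω < (0 : ℝ), ∀ t : ℝ, 0 ≤ t → ‖expT A t‖ ≤ M * Real.exp (ω * t)

/-! If `G` were finite, test the frame inequality on an orthonormal sequence `vₙ`, which exists
because `H` is infinite-dimensional. By Bessel's inequality `⟪vₙ, e^{tA} g⟫ → 0` for every `t`,
and exponential stability gives the integrable majorant `‖e^{tA} g‖²` on `[0, ∞)`, so by dominated
convergence each of the finitely many integrals tends to `0`, contradicting the lower frame
bound `c ‖vₙ‖² = c > 0`. -/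

open Filter Topology

theorem exists_orthonormal_nat_of_not_finiteDimensional {𝕜 E : Type*} [RCLike 𝕜]
    [NormedAddCommGroup E] [InnerProductSpace 𝕜 E] (h : ¬ FiniteDimensional 𝕜 E) :
    ∃ v : ℕ → E, Orthonormal 𝕜 v := by
  let b := Module.Free.chooseBasis 𝕜 E
  have : Infinite (Module.Free.ChooseBasisIndex 𝕜 E) :=
    not_finite_iff_infinite.mp fun _ ↦ h (Module.Finite.of_basis b)
  exact ⟨_, InnerProductSpace.gramSchmidtNormed_orthonormal
    (b.linearIndependent.comp _ (Infinite.natEmbedding _).injective)⟩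

theorem Orthonormal.tendsto_integral_norm_inner_sq {𝕜 E α : Type*} [RCLike 𝕜]
    [NormedAddCommGroup E] [InnerProductSpace 𝕜 E] [MeasurableSpace α] {μ : Measure α}
    {v : ℕ → E} (hv : Orthonormal 𝕜 v) {h : α → E} (hm : AEStronglyMeasurable h μ)
    (hint : Integrable (fun t ↦ ‖h t‖ ^ 2) μ) :
    Tendsto (fun n ↦ ∫ t, ‖inner 𝕜 (v n) (h t)‖ ^ 2 ∂μ) atTop (𝓝 0) := by
  have hdom (n : ℕ) (t : α) : ‖‖inner 𝕜 (v n) (h t)‖ ^ 2‖ ≤ ‖h t‖ ^ 2 := by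
    rw [Real.norm_of_nonneg (by positivity)]
    gcongr
    simpa [hv.1 n] using norm_inner_le_norm (𝕜 := 𝕜) (v n) (h t)
  simpa using tendsto_integral_of_dominated_convergence (fun t ↦ ‖h t‖ ^ 2)
    (fun n ↦ (hm.const_inner (c := v n)).norm.pow 2) hint (fun n ↦ ae_of_all _ (hdom n))
    (ae_of_all _ fun t ↦ (hv.inner_products_summable (h t)).tendsto_atTop_zero)

theorem continuous_expT (A : H →L[ℂ] H) : Continuous (expT A) :=
  (continuous_iff_continuousAt.2 fun x ↦ (NormedSpace.exp_analytic (𝕂 := ℂ) x).continuousAt).comp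
    (Complex.continuous_ofReal.smul continuous_const)

theorem ExpStable.integrableOn_norm_expT_apply_sq {A : H →L[ℂ] H} (hA : ExpStable A) (g : H) :
    IntegrableOn (fun t ↦ ‖expT A t g‖ ^ 2) (Set.Ici 0) := by
  obtain ⟨M, -, ω, hω, hbound⟩ := hA
  have hexp : IntegrableOn (fun t ↦ Real.exp (2 * ω * t)) (Set.Ici 0) :=
    (integrableOn_Ici_iff_integrableOn_Ioi).mpr (integrableOn_exp_mul_Ioi (by linarith) 0)
  refine (hexp.const_mul ((M * ‖g‖) ^ 2)).mono'
    (((continuous_expT A).clm_apply continuous_const).norm.pow 2).aestronglyMeasurable ?_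
  filter_upwards [ae_restrict_mem measurableSet_Ici] with t ht
  have hle : ‖expT A t g‖ ≤ M * Real.exp (ω * t) * ‖g‖ :=
    (expT A t).le_of_opNorm_le (hbound t ht) g
  calc ‖‖expT A t g‖ ^ 2‖ = ‖expT A t g‖ ^ 2 := Real.norm_of_nonneg (by positivity)
    _ ≤ (M * Real.exp (ω * t) * ‖g‖) ^ 2 := by gcongr
    _ = (M * ‖g‖) ^ 2 * Real.exp (2 * ω * t) := by
      rw [show 2 * ω * t = ω * t + ω * t by ring, Real.exp_add]; ring

theorem ExpStable.tendsto_integral_norm_inner_expT_sq {A : H →L[ℂ] H} (hA : ExpStable A)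
    {v : ℕ → H} (hv : Orthonormal ℂ v) (g : H) :
    Tendsto (fun n ↦ ∫ t in Set.Ici 0, ‖⟪v n, expT A t g⟫‖ ^ 2) atTop (𝓝 0) :=
  hv.tendsto_integral_norm_inner_sq
    ((continuous_expT A).clm_apply continuous_const).aestronglyMeasurable
    (hA.integrableOn_norm_expT_apply_sq g)

theorem stmt6_general
    {H : Type*} [NormedAddCommGroup H] [InnerProductSpace ℂ H] [CompleteSpace H]
    (hinf : ¬ FiniteDimensional ℂ H)
    (A : H →L[ℂ] H) (hstable : ExpStable A)
    (G : Set H)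
    (hframe : SemiContFrame A G (Set.Ici 0)) :
    G.Infinite := by
  intro hfin
  have := hfin.fintype
  obtain ⟨v, hv⟩ := exists_orthonormal_nat_of_not_finiteDimensional hinf
  obtain ⟨c, hc, _, _, hineq⟩ := hframe
  have hlim : Tendsto (fun n ↦ ∑' g : G, ∫ t in Set.Ici 0, ‖⟪v n, expT A t (g : H)⟫‖ ^ 2)
      atTop (𝓝 0) := by
    simp only [tsum_fintype]
    simpa using tendsto_finsetSum Finset.univ fun (g : G) _ ↦
      hstable.tendsto_integral_norm_inner_expT_sq hv (g : H)
  have hlow (n : ℕ) : c ≤ ∑' g : G, ∫ t in Set.Ici 0, ‖⟪v n, expT A t (g : H)⟫‖ ^ 2 := by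
    simpa [hv.1 n] using (hineq (v n)).1
  exact hc.not_ge (ge_of_tendsto' hlim hlow)

theorem stmt6
    {H : Type*} [NormedAddCommGroup H] [InnerProductSpace ℂ H] [CompleteSpace H]
    [TopologicalSpace.SeparableSpace H]
    (hinf : ¬ FiniteDimensional ℂ H)
    (A : H →L[ℂ] H) (hstable : ExpStable A)
    (G : Set H) (hGc : G.Countable) (hG : IsBesselSet G)
    (hframe : SemiContFrame A G (Set.Ici 0)) :
    G.Infinite :=
  stmt6_general hinf A hstable G hframe

end
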